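/- Let Δ be a Boolean algebra of formulas in variable x, and let μ be a global Δ-measure which is smooth over a small model M. Then μ is generically stable over M: (1) μ is finitely satisfiable in M, i.e., every φ(x;b) ∈ Δ(𝒰) with μ(φ(x;b)) > 0 is satisfied by a tuple from M; and (2) μ is M-definable, i.e., for every φ(x;y) ∈ Δ and every r, the set {b ∈ 𝒰 : μ(φ(x;b)) < r} is open in the M-logic topology (a union of sets defined by formulas over M). -/

import Mathlib

namespace KeislerPaper

open FirstOrder FirstOrder.Language Set MeasureTheory
open scoped ENNReal Classical

universe u v

/-! ### Finitely additive probability measures on a distinguished collection of sets.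

A Keisler measure over a parameter set `A` is represented as a real-valued set-function
which is a finitely additive probability measure on the collection of `A`-definable sets
(its values outside the distinguished collection are irrelevant, and all notions below
only refer to values on the relevant collections). -/

structure FAM (X : Type u) (D : Set (Set X)) : Type u where
  val : Set X → ℝ
  nonneg : ∀ s ∈ D, 0 ≤ val s
  isProb : val Set.univ = 1
  additive : ∀ s t : Set X, s ∈ D → t ∈ D → Disjoint s t → val (s ∪ t) = val s + val t

/-- Two set-functions agree on a collection of sets. -/
def agreeOn {X : Type u} (D : Set (Set X)) (f g : Set X → ℝ) : Prop :=
  ∀ s ∈ D, f s = g s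

/-- A measure is (the measure associated to) a type when it is `0-1`-valued. -/
def IsTypeOn {X : Type u} (D : Set (Set X)) (f : Set X → ℝ) : Prop :=
  ∀ s ∈ D, f s = 0 ∨ f s = 1

/-- The `D₀`-restriction of `f` has a unique extension to a finitely additive
probability measure on the collection `D₁`: this is smoothness of the restriction of `f`
to `D₀` relative to `D₁`. -/
def SmoothOn {X : Type u} (D₀ D₁ : Set (Set X)) (f : Set X → ℝ) : Prop :=
  (∃ ν : FAM X D₁, agreeOn D₀ ν.val f) ∧
    ∀ ν₁ ν₂ : FAM X D₁, agreeOn D₀ ν₁.val f → agreeOn D₀ ν₂.val f →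
      agreeOn D₁ ν₁.val ν₂.val

/-- The Dirac measure at a point (the measure associated to a realized type). -/
noncomputable def diracF {X : Type u} (D : Set (Set X)) (x : X) : FAM X D where
  val s := if x ∈ s then 1 else 0
  nonneg s _ := by by_cases h : x ∈ s <;> simp [h]
  isProb := by simp
  additive s t _ _ hd := by
    by_cases hs : x ∈ s
    · have ht : x ∉ t := fun ht => Set.disjoint_left.mp hd hs ht
      simp [Set.mem_union, hs, ht]
    · by_cases ht : x ∈ t <;> simp [Set.mem_union, hs, ht]

/-- Convex combination `t·μ + (1-t)·ν` of two finitely additive measures. -/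
noncomputable def FAM.mix {X : Type u} {D : Set (Set X)} (t : ℝ) (h0 : 0 ≤ t) (h1 : t ≤ 1)
    (μ ν : FAM X D) : FAM X D where
  val s := t * μ.val s + (1 - t) * ν.val s
  nonneg s hs := add_nonneg (mul_nonneg h0 (μ.nonneg s hs))
    (mul_nonneg (by linarith) (ν.nonneg s hs))
  isProb := by
    show t * μ.val Set.univ + (1 - t) * ν.val Set.univ = 1
    rw [μ.isProb, ν.isProb]; ring
  additive s s' hs hs' hd := by
    show t * μ.val (s ∪ s') + (1 - t) * ν.val (s ∪ s') =
      t * μ.val s + (1 - t) * ν.val s + (t * μ.val s' + (1 - t) * ν.val s')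
    rw [μ.additive s s' hs hs' hd, ν.additive s s' hs hs' hd]; ring

/-! ### Keisler measures -/

/-- The collection of `A`-definable subsets of `α → U`. -/
def Dset (L : FirstOrder.Language.{u, u}) {U : Type u} [L.Structure U] (A : Set U)
    (α : Type u) : Set (Set (α → U)) :=
  {s | A.Definable L s}

/-- A Keisler measure over the parameter set `A`, in the variable(s) `α`:
a finitely additive probability measure on the Boolean algebra of `A`-definable sets. -/
abbrev KMeasure (L : FirstOrder.Language.{u, u}) {U : Type u} [L.Structure U] (A : Set U)
    (α : Type u) : Type u :=
  FAM (α → U) (Dset L A α)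

/-- The set `φ(U; b)` defined by a formula `φ(x; y)` with the parameters `b`. -/
def defFam {U : Type u} {L' : FirstOrder.Language.{u, u}} [L'.Structure U] {α : Type u}
    {m : ℕ} (φ : L'.Formula (α ⊕ Fin m)) (b : Fin m → U) : Set (α → U) :=
  {a | φ.Realize (Sum.elim a b)}

/-- `b ≡_A b'` : the tuples `b` and `b'` have the same type over `A`. -/
def SameTypeOver (L : FirstOrder.Language.{u, u}) {U : Type u} [L.Structure U] (A : Set U)
    {m : ℕ} (b b' : Fin m → U) : Prop :=
  ∀ φ : (L[[A]]).Formula (Fin m), φ.Realize b ↔ φ.Realize b'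

/-- `f` (the values of a global Keisler measure) is invariant over `Mset`. -/
def InvariantOn (L : FirstOrder.Language.{u, u}) {U : Type u} [L.Structure U] {α : Type u}
    (f : Set (α → U) → ℝ) (Mset : Set U) : Prop :=
  ∀ (m : ℕ) (φ : (L[[Mset]]).Formula (α ⊕ Fin m)) (b b' : Fin m → U),
    SameTypeOver L Mset b b' → f (defFam φ b) = f (defFam φ b')

/-- A measure (given by its values `f` on the collection `D`) is finitely satisfiable in
`Mset`: every set in `D` of positive measure contains a tuple from `Mset`. -/
def FinSatIn {U : Type u} {α : Type u} (D : Set (Set (α → U))) (f : Set (α → U) → ℝ)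
    (Mset : Set U) : Prop :=
  ∀ s ∈ D, 0 < f s → ∃ a ∈ s, ∀ i, a i ∈ Mset

/-- A global Keisler measure (given by its values `f`) is definable over `Mset`:
it is `Mset`-invariant and for every formula `φ(x;y)` the induced map on `S_y(Mset)` is
continuous, i.e. the sets `{b : μ(φ(x;b)) < r}` and `{b : μ(φ(x;b)) > r}` are open in the
`Mset`-logic topology. -/
def DefinableOver (L : FirstOrder.Language.{u, u}) {U : Type u} [L.Structure U] {α : Type u}
    (f : Set (α → U) → ℝ) (Mset : Set U) : Prop :=
  InvariantOn L f Mset ∧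
    ∀ (m : ℕ) (φ : L.Formula (α ⊕ Fin m)) (r : ℝ),
      (∀ b : Fin m → U, f (defFam φ b) < r →
        ∃ ψ : (L[[Mset]]).Formula (Fin m), ψ.Realize b ∧
          ∀ b' : Fin m → U, ψ.Realize b' → f (defFam φ b') < r) ∧
      (∀ b : Fin m → U, r < f (defFam φ b) →
        ∃ ψ : (L[[Mset]]).Formula (Fin m), ψ.Realize b ∧
          ∀ b' : Fin m → U, ψ.Realize b' → r < f (defFam φ b'))

/-! ### NIP -/

/-- A formula `φ(x; y)` has the independence property (in `U`). -/
def HasIP {L : FirstOrder.Language.{u, u}} (U : Type u) [L.Structure U] {α : Type u}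
    {β : Type v} (φ : L.Formula (α ⊕ β)) : Prop :=
  ∃ (a : ℕ → α → U) (c : Set ℕ → β → U),
    ∀ (i : ℕ) (S : Set ℕ), φ.Realize (Sum.elim (a i) (c S)) ↔ i ∈ S

/-- The (complete theory of the) structure `U` is NIP: no formula has the independence
property. -/
def TheoryNIP (L : FirstOrder.Language.{u, u}) (U : Type u) [L.Structure U] : Prop :=
  ∀ (α β : Type u) (φ : L.Formula (α ⊕ β)), ¬ HasIP U φ

/-! ### Models, saturation, monster model -/

/-- `S` is (the underlying set of) an elementary submodel of `U`, via the Tarski–Vaught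
criterion. -/
def IsElemSubset (L' : FirstOrder.Language.{u, u}) (U : Type u) [L'.Structure U]
    (S : Set U) : Prop :=
  S.Nonempty ∧
    ∀ (m : ℕ) (φ : L'.Formula (Fin m ⊕ Fin 1)) (b : Fin m → U), (∀ i, b i ∈ S) →
      (∃ a : Fin 1 → U, φ.Realize (Sum.elim b a)) →
      ∃ a : Fin 1 → U, (∀ i, a i ∈ S) ∧ φ.Realize (Sum.elim b a)

/-- The submodel (with underlying set) `S` of `U` is `κ`-saturated: every type over a
subset `A ⊆ S` with `|A| < κ` which is finitely satisfiable in `S` is realized in `S`. -/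
def SaturatedIn (L' : FirstOrder.Language.{u, u}) (U : Type u) [L'.Structure U] (S : Set U)
    (κ : Cardinal.{u}) : Prop :=
  ∀ A : Set U, A ⊆ S → Cardinal.mk A < κ →
    ∀ Φ : Set ((L'[[A]]).Formula (Fin 1)),
      (∀ Φ₀ : Finset ((L'[[A]]).Formula (Fin 1)), ↑Φ₀ ⊆ Φ →
        ∃ b : Fin 1 → U, (∀ i, b i ∈ S) ∧ ∀ φ ∈ Φ₀, Formula.Realize φ b) →
      ∃ b : Fin 1 → U, (∀ i, b i ∈ S) ∧ ∀ φ ∈ Φ, Formula.Realize φ b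

/-- `A` is small with respect to the degree of saturation `κ` of the monster model. -/
def SmallSet (L : FirstOrder.Language.{u, u}) {U : Type u} (κ : Cardinal.{u}) (A : Set U) :
    Prop :=
  Cardinal.mk A + L.card + Cardinal.aleph0 < κ

/-- `Mset ≺⁺ Nset` : `Nset` is a `(|Mset| + |T|)⁺`-saturated elementary extension. -/
def PlusExt (L' : FirstOrder.Language.{u, u}) (U : Type u) [L'.Structure U]
    (Mset Nset : Set U) : Prop :=
  Mset ⊆ Nset ∧ IsElemSubset L' U Nset ∧
    SaturatedIn L' U Nset (Order.succ (Cardinal.mk Mset + L'.card + Cardinal.aleph0))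

/-- `U` is a monster model of degree `κ`: it is `κ`-saturated and strongly
`κ`-homogeneous. -/
def IsMonster (L : FirstOrder.Language.{u, u}) (U : Type u) [L.Structure U]
    (κ : Cardinal.{u}) : Prop :=
  (∀ A : Set U, Cardinal.mk A < κ →
    ∀ Φ : Set ((L[[A]]).Formula (Fin 1)),
      (∀ Φ₀ : Finset ((L[[A]]).Formula (Fin 1)), ↑Φ₀ ⊆ Φ →
        ∃ b : Fin 1 → U, ∀ φ ∈ Φ₀, Formula.Realize φ b) →
      ∃ b : Fin 1 → U, ∀ φ ∈ Φ, Formula.Realize φ b) ∧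
  ∀ (β : Type u), Cardinal.mk β < κ → ∀ a a' : β → U,
    (∀ φ : L.Formula β, φ.Realize a ↔ φ.Realize a') →
    ∃ σ : U ≃[L] U, ∀ i, σ (a i) = a' i

/-! ### Heirs -/

/-- `f` (the values of a measure over `Bset ⊇ Mset`) is an heir over `Mset`. -/
def IsHeir (L : FirstOrder.Language.{u, u}) {U : Type u} [L.Structure U] {α : Type u}
    (f : Set (α → U) → ℝ) (Mset Bset : Set U) : Prop :=
  ∀ ε : ℝ, 0 < ε → ∀ (n m : ℕ) (φ : Fin n → (L[[Mset]]).Formula (α ⊕ Fin m))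
    (b : Fin m → U), (∀ j, b j ∈ Bset) →
    ∃ d : Fin m → U, (∀ j, d j ∈ Mset) ∧
      ∀ i : Fin n, |f (defFam (φ i) b) - f (defFam (φ i) d)| < ε

/-! ### Amalgams and products -/

/-- The cylinder over the first block of variables. -/
def cylL {U : Type u} {α : Type u} (β : Type u) (s : Set (α → U)) : Set ((α ⊕ β) → U) :=
  {h | (fun a => h (Sum.inl a)) ∈ s}

/-- The cylinder over the second block of variables. -/
def cylR {U : Type u} (α : Type u) {β : Type u} (t : Set (β → U)) : Set ((α ⊕ β) → U) :=
  {h | (fun b => h (Sum.inr b)) ∈ t}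

/-- `w` (the values of a measure in the variables `x y`) is a separated amalgam over `A` of
`f` (in variable `x`) and `g` (in variable `y`): `w(φ(x) ∧ ψ(y)) = f(φ(x))·g(ψ(y))`. -/
def SepAmalgamOn (L : FirstOrder.Language.{u, u}) {U : Type u} [L.Structure U]
    {α β : Type u} (A : Set U) (w : Set ((α ⊕ β) → U) → ℝ) (f : Set (α → U) → ℝ)
    (g : Set (β → U) → ℝ) : Prop :=
  ∀ (s : Set (α → U)) (t : Set (β → U)), A.Definable L s → A.Definable L t →
    w (cylL β s ∩ cylR α t) = f s * g t

/-! ### The product of invariant measures (via integration on the type space).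

For a global measure `ν` and a small model `N`, the regular Borel extension of `ν|N` to
the type space `S_y(N)` is encoded by the Carathéodory outer measure generated by `ν` on
the `N`-definable sets, and integrals against it are defined by the layer-cake formula. -/

/-- The outer measure on `β → U` generated by the values `νv` on `Nset`-definable sets. -/
noncomputable def outerOf (L : FirstOrder.Language.{u, u}) {U : Type u} [L.Structure U]
    {β : Type u} (νv : Set (β → U) → ℝ) (Nset : Set U) : Set (β → U) → ℝ≥0∞ := fun E =>
  ⨅ (D : ℕ → Set (β → U)) (_ : ∀ n, Nset.Definable L (D n)) (_ : E ⊆ ⋃ n, D n),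
    ∑' n, ENNReal.ofReal (νv (D n))

/-- The integral `∫_{S_y(N)} f dν`, via the layer-cake formula. -/
noncomputable def ointegral (L : FirstOrder.Language.{u, u}) {U : Type u} [L.Structure U]
    {β : Type u} (νv : Set (β → U) → ℝ) (Nset : Set U) (f : (β → U) → ℝ) : ℝ :=
  (∫⁻ t in Set.Ioi (0 : ℝ), outerOf L νv Nset {b | t < f b}).toReal

/-- `ω = μ(x) ⊗ ν(y)` : for every set `s` definable over a small model `Nset ⊇ Mset`,
`ω(s) = ∫ μ(s_b) dν(b)`, the integral over `S_y(Nset)` of the `μ`-measures of the fibers.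
(Here `μ` is the `Mset`-invariant factor.) -/
def IsTensorL (L : FirstOrder.Language.{u, u}) {U : Type u} [L.Structure U] {α β : Type u}
    (Mset : Set U) (κ : Cardinal.{u}) (μ : KMeasure L (Set.univ : Set U) α)
    (ν : KMeasure L (Set.univ : Set U) β) (ω : KMeasure L (Set.univ : Set U) (α ⊕ β)) :
    Prop :=
  ∀ (s : Set ((α ⊕ β) → U)) (Nset : Set U), IsElemSubset L U Nset → Mset ⊆ Nset →
    SmallSet L κ Nset → Nset.Definable L s →
    ω.val s = ointegral L ν.val Nset fun b => μ.val {a | Sum.elim a b ∈ s}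

/-- `ω = ν(y) ⊗ μ(x)` where `ω` is a measure in the variables `(x, y)` (the first
block of variables is that of `μ`, the second that of the `Mset`-invariant factor `ν`). -/
def IsTensorR (L : FirstOrder.Language.{u, u}) {U : Type u} [L.Structure U] {α β : Type u}
    (Mset : Set U) (κ : Cardinal.{u}) (ν : KMeasure L (Set.univ : Set U) β)
    (μ : KMeasure L (Set.univ : Set U) α) (ω : KMeasure L (Set.univ : Set U) (α ⊕ β)) :
    Prop :=
  ∀ (s : Set ((α ⊕ β) → U)) (Nset : Set U), IsElemSubset L U Nset → Mset ⊆ Nset →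
    SmallSet L κ Nset → Nset.Definable L s →
    ω.val s = ointegral L μ.val Nset fun a => ν.val {b | Sum.elim a b ∈ s}

/-! ### Pairs of models: the language `L_P = L ∪ {P}` -/

/-- The language with a single unary predicate `P`. -/
def pLang : FirstOrder.Language.{u, u} where
  Functions := fun _ => PEmpty
  Relations := fun n =>
    match n with
    | 1 => PUnit
    | _ => PEmpty

/-- The `pLang`-structure on `U` in which `P` is interpreted by the subset `PU`. -/
def pStruct {U : Type u} (PU : Set U) : pLang.{u}.Structure U where
  funMap := fun f _ => PEmpty.elim f
  RelMap := fun {n} r x =>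
    match n, r, x with
    | 1, _, x => x 0 ∈ PU
    | 0, r, _ => PEmpty.elim r
    | _ + 2, r, _ => PEmpty.elim r

/-- The language `L_P`, obtained from `L` by adding a new unary predicate `P`. -/
def LP (L : FirstOrder.Language.{u, u}) : FirstOrder.Language.{u, u} :=
  L.sum pLang

/-- The `L_P`-structure `(U, PU)` on `U`, where `P` is interpreted by `PU`. -/
def pairStr (L : FirstOrder.Language.{u, u}) {U : Type u} [L.Structure U] (PU : Set U) :
    (LP L).Structure U :=
  letI : pLang.{u}.Structure U := pStruct PU
  FirstOrder.Language.sumStructure L pLang U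

/-- `S` is an elementary submodel of the pair `(U, PU)` in the language `L_P`. -/
def PIsElemSubset (L : FirstOrder.Language.{u, u}) {U : Type u} [L.Structure U]
    (PU S : Set U) : Prop :=
  @IsElemSubset (LP L) U (pairStr L PU) S

/-- The pair `Mset ≺⁺ Nset` inside `(U, PU)`, in the language `L_P`. -/
def PairPlusExt (L : FirstOrder.Language.{u, u}) {U : Type u} [L.Structure U]
    (PU Mset Nset : Set U) : Prop :=
  @PlusExt (LP L) U (pairStr L PU) Mset Nset

/-- `P(x)` : the set of tuples all of whose coordinates satisfy the predicate `P`. -/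
def PSetC {U : Type u} (PU : Set U) (α : Type u) : Set (α → U) :=
  {a | ∀ i, a i ∈ PU}

/-- The collection of `Δ(A)`-definable sets, where `Δ` is the Boolean algebra of formulas
generated by `L`-formulas together with `P(x)`: these are exactly the sets
`(s₁ ∩ P) ∪ (s₂ \ P)` with `s₁, s₂` being `A`-definable `L`-sets. -/
def PDset (L : FirstOrder.Language.{u, u}) {U : Type u} [L.Structure U] (PU A : Set U)
    (α : Type u) : Set (Set (α → U)) :=
  {s | ∃ s₁ s₂ : Set (α → U), A.Definable L s₁ ∧ A.Definable L s₂ ∧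
    s = (s₁ ∩ PSetC PU α) ∪ (s₂ \ PSetC PU α)}

/-! ### The canonical retraction -/

/-- The defining relation of the retraction `F̃_M` of the paper: `g` (the values of
`F̃_M(μ)`) agrees over `M'` with (the `L`-reduct of) every global `Δ`-measure extending
`μ|N` and giving `P(x)` measure `1`. Here `f` gives the values of `μ`, and the ambient
data is `M ≺⁺ M'`, `(M', M) ≺⁺ (N', N)`, with `(U, PU)` an elementary extension of the
pair `(N', N)`. -/
def TildeFMRel (L : FirstOrder.Language.{u, u}) {U : Type u} [L.Structure U] {α : Type u}
    (M'set Nset PU : Set U) (f g : Set (α → U) → ℝ) : Prop :=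
  ∀ ν : FAM (α → U) (PDset L PU Set.univ α),
    agreeOn (Dset L Nset α) ν.val f → ν.val (PSetC PU α) = 1 →
    agreeOn (Dset L M'set α) g ν.val

/-- `F` is the canonical retraction `F_M` (of Chernikov–Pillay–Simon) from the space of
global `Mset`-invariant Keisler measures onto the space of global measures finitely
satisfiable in `Mset`: it maps invariant measures to finitely satisfiable ones, fixes the
finitely satisfiable ones, satisfies `F(μ)|M = μ|M`, is affine and continuous, and agrees
on `Mset`-invariant types with Simon's canonical retraction (constructed via the pair
`(M', Mset) ≺⁺ (N', Nset)`, elementarily embedded in `(U, PU)`). -/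
def IsCPS (L : FirstOrder.Language.{u, u}) {U : Type u} [L.Structure U]
    (Mset M'set Nset PU : Set U)
    (F : ∀ γ : Type u, KMeasure L (Set.univ : Set U) γ → KMeasure L (Set.univ : Set U) γ) :
    Prop :=
  (∀ (γ : Type u) (μ : KMeasure L (Set.univ : Set U) γ), InvariantOn L μ.val Mset →
    InvariantOn L (F γ μ).val Mset ∧
      FinSatIn (Dset L (Set.univ : Set U) γ) (F γ μ).val Mset ∧
      agreeOn (Dset L Mset γ) (F γ μ).val μ.val) ∧
  (∀ (γ : Type u) (μ : KMeasure L (Set.univ : Set U) γ), InvariantOn L μ.val Mset →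
    FinSatIn (Dset L (Set.univ : Set U) γ) μ.val Mset →
    agreeOn (Dset L (Set.univ : Set U) γ) (F γ μ).val μ.val) ∧
  (∀ (γ : Type u) (μ ν : KMeasure L (Set.univ : Set U) γ), InvariantOn L μ.val Mset →
    InvariantOn L ν.val Mset → ∀ (t : ℝ) (h0 : 0 ≤ t) (h1 : t ≤ 1),
      agreeOn (Dset L (Set.univ : Set U) γ) (F γ (FAM.mix t h0 h1 μ ν)).val
        (FAM.mix t h0 h1 (F γ μ) (F γ ν)).val) ∧
  (∀ (γ : Type u) (μ : KMeasure L (Set.univ : Set U) γ), InvariantOn L μ.val Mset →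
    ∀ s ∈ Dset L (Set.univ : Set U) γ, ∀ ε : ℝ, 0 < ε →
      ∃ (k : ℕ) (ts : Fin k → Set (γ → U)) (δ : ℝ), 0 < δ ∧
        (∀ i, (Set.univ : Set U).Definable L (ts i)) ∧
        ∀ ν : KMeasure L (Set.univ : Set U) γ, InvariantOn L ν.val Mset →
          (∀ i, |ν.val (ts i) - μ.val (ts i)| < δ) →
          |(F γ ν).val s - (F γ μ).val s| < ε) ∧
  (∀ (γ : Type u) (p : KMeasure L (Set.univ : Set U) γ), InvariantOn L p.val Mset →
    IsTypeOn (Dset L (Set.univ : Set U) γ) p.val →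
    InvariantOn L (F γ p).val Mset ∧ TildeFMRel L M'set Nset PU p.val (F γ p).val)

/-! ### Indiscernible measures and products of smooth measures -/

/-- The cylinder in the `i`-th copy of the variables, inside an `ω`-indexed product. -/
def cylAt {U : Type u} {α : Type u} (i : ℕ) (s : Set (α → U)) : Set ((ℕ × α) → U) :=
  {h | (fun a => h (i, a)) ∈ s}

/-- A measure in the variables `(x_i)_{i < ω}` (given by its values `f`) is indiscernible
over `Mset`. -/
def IndiscernibleOver (L : FirstOrder.Language.{u, u}) {U : Type u} [L.Structure U]
    {α : Type u} (f : Set ((ℕ × α) → U) → ℝ) (Mset : Set U) : Prop :=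
  ∀ (n : ℕ) (φ : (L[[Mset]]).Formula (Fin n × α)) (i j : Fin n → ℕ),
    StrictMono i → StrictMono j →
    f {h | φ.Realize fun p => h (i p.1, p.2)} = f {h | φ.Realize fun p => h (j p.1, p.2)}

/-! ### Local (Δ-) measures -/

/-- The collection of instances, with parameters in `A`, of the formulas in the family
`Δ` (a family of formulas `φ(x; y)` in the object variables `α`). -/
def DeltaSet (L : FirstOrder.Language.{u, u}) {U : Type u} [L.Structure U] {α : Type u}
    (Δ : ∀ m : ℕ, Set (L.Formula (α ⊕ Fin m))) (A : Set U) : Set (Set (α → U)) :=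
  {s | ∃ (m : ℕ) (φ : L.Formula (α ⊕ Fin m)) (b : Fin m → U),
    φ ∈ Δ m ∧ (∀ j, b j ∈ A) ∧ s = defFam φ b}

/-- A collection of sets is a Boolean algebra of sets. -/
def IsBoolAlg {X : Type u} (D : Set (Set X)) : Prop :=
  Set.univ ∈ D ∧ (∀ s ∈ D, sᶜ ∈ D) ∧ ∀ s ∈ D, ∀ t ∈ D, s ∩ t ∈ D

/-- The operation `φ(x, y) ↦ (∃ y) φ(x, y)` on subsets of the `xy`-variable space. -/
def exY {U : Type u} {α β : Type u} (s : Set ((α ⊕ β) → U)) : Set ((α ⊕ β) → U) :=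
  {h | ∃ b : β → U, Sum.elim (fun a => h (Sum.inl a)) b ∈ s}

/-- A global Keisler measure (given by its values `f`) is smooth: its restriction to some
small model has a unique extension to a global Keisler measure. -/
def GSmooth (L : FirstOrder.Language.{u, u}) {U : Type u} [L.Structure U]
    (κ : Cardinal.{u}) {α : Type u} (f : Set (α → U) → ℝ) : Prop :=
  ∃ M₀ : Set U, IsElemSubset L U M₀ ∧ SmallSet L κ M₀ ∧
    SmoothOn (Dset L M₀ α) (Dset L (Set.univ : Set U) α) f

/-!
Smoothness of `μ` over `M` forces `μ(s) = inf {μ(u) : u ∈ Δ(M), s ⊆ u}` for every `s ∈ Δ(𝒰)`: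
otherwise the Hahn–Banach theorem, applied to the upper integral of `Δ(M)`-simple functions,
produces a second global extension of `μ|M`, one giving `s` its outer measure.

Both claims follow by approximating from above by `Δ(M)`-sets. For finite satisfiability,
approximate `sᶜ`: this leaves a `Δ(M)`-set of positive measure inside `s`, and it contains a tuple
from `M` by Tarski–Vaught. For definability, if `φ(x;b) ⊆ χ(x;c)` with `χ(x;c) ∈ Δ(M)` of measure
`< r`, then `∀x (φ(x;y) → χ(x;c))` is a formula over `M` satisfied by `b`, and every `b'`
satisfying it has `μ(φ(x;b')) < r`.
-/

section BooleanAlgebra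

variable {X : Type u} {D : Set (Set X)} {s t : Set X}

namespace IsBoolAlg

theorem univ_mem (hD : IsBoolAlg D) : Set.univ ∈ D := hD.1

theorem compl_mem (hD : IsBoolAlg D) (hs : s ∈ D) : sᶜ ∈ D := hD.2.1 s hs

theorem inter_mem (hD : IsBoolAlg D) (hs : s ∈ D) (ht : t ∈ D) : s ∩ t ∈ D := hD.2.2 s hs t ht

theorem empty_mem (hD : IsBoolAlg D) : ∅ ∈ D := by
  simpa using hD.compl_mem hD.univ_mem

theorem union_mem (hD : IsBoolAlg D) (hs : s ∈ D) (ht : t ∈ D) : s ∪ t ∈ D := by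
  simpa [compl_inter] using hD.compl_mem (hD.inter_mem (hD.compl_mem hs) (hD.compl_mem ht))

end IsBoolAlg

end BooleanAlgebra

namespace FAM

variable {X : Type u} {D : Set (Set X)} (μ : FAM X D) {s t : Set X}

def restrict {D₀ : Set (Set X)} (h : D₀ ⊆ D) : FAM X D₀ where
  val := μ.val
  nonneg s hs := μ.nonneg s (h hs)
  isProb := μ.isProb
  additive s t hs ht := μ.additive s t (h hs) (h ht)

theorem val_empty (hD : IsBoolAlg D) : μ.val ∅ = 0 := by
  have := μ.additive ∅ ∅ hD.empty_mem hD.empty_mem (disjoint_empty _)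
  rw [union_empty] at this
  linarith

theorem val_inter_add_val_inter_compl (hD : IsBoolAlg D) (ht : t ∈ D) (hs : s ∈ D) :
    μ.val (t ∩ s) + μ.val (t ∩ sᶜ) = μ.val t := by
  rw [← μ.additive _ _ (hD.inter_mem ht hs) (hD.inter_mem ht (hD.compl_mem hs))
    (disjoint_compl_right.mono inter_subset_right inter_subset_right), inter_union_compl]

theorem val_compl (hD : IsBoolAlg D) (hs : s ∈ D) : μ.val sᶜ = 1 - μ.val s := by
  have := μ.val_inter_add_val_inter_compl hD hD.univ_mem hs
  rw [univ_inter, univ_inter, μ.isProb] at this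
  linarith

theorem val_mono (hD : IsBoolAlg D) (hs : s ∈ D) (ht : t ∈ D) (hst : s ⊆ t) :
    μ.val s ≤ μ.val t := by
  rw [← μ.val_inter_add_val_inter_compl hD ht hs, inter_eq_self_of_subset_right hst]
  linarith [μ.nonneg _ (hD.inter_mem ht (hD.compl_mem hs))]

theorem nonempty_of_val_pos (hD : IsBoolAlg D) (hs : 0 < μ.val s) : s.Nonempty := by
  rw [nonempty_iff_ne_empty]
  rintro rfl
  linarith [μ.val_empty hD]

end FAM

section SimpleFunctions

noncomputable def simpleFun (X : Type u) : (Set X →₀ ℝ) →ₗ[ℝ] X → ℝ :=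
  Finsupp.linearCombination ℝ fun u => u.indicator 1

variable {X : Type u}

theorem simpleFun_apply (c : Set X →₀ ℝ) (x : X) :
    simpleFun X c x = ∑ u ∈ c.support, c u * u.indicator 1 x := by
  simp [simpleFun, Finsupp.linearCombination_apply, Finsupp.sum]

theorem simpleFun_single (u : Set X) (a : ℝ) :
    simpleFun X (Finsupp.single u a) = a • u.indicator 1 := by
  simp [simpleFun]

theorem abs_simpleFun_le (c : Set X →₀ ℝ) (x : X) :
    |simpleFun X c x| ≤ ∑ u ∈ c.support, |c u| := by
  rw [simpleFun_apply]
  refine (Finset.abs_sum_le_sum_abs _ _).trans (Finset.sum_le_sum fun u _ => ?_)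
  rw [abs_mul]
  refine mul_le_of_le_one_right (abs_nonneg _) ?_
  by_cases hx : x ∈ u <;> simp [hx]

theorem coe_support_single_subset {D : Set (Set X)} {t : Set X} (ht : t ∈ D) (a : ℝ) :
    ↑(Finsupp.single t a).support ⊆ D := fun _ hu =>
  (Finset.mem_singleton.1 (Finsupp.support_single_subset hu)) ▸ ht

end SimpleFunctions

namespace IsBoolAlg

variable {X : Type u} {D : Set (Set X)} (hD : IsBoolAlg D)
include hD

theorem setOf_le_sum_mem {S : Finset (Set X)} (hS : ∀ u ∈ S, u ∈ D) (a : Set X → ℝ) (r : ℝ) :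
    {x | r ≤ ∑ u ∈ S, a u * u.indicator 1 x} ∈ D := by
  induction S using Finset.induction_on generalizing r with
  | empty =>
    by_cases hr : r ≤ 0
    · simpa [hr] using hD.univ_mem
    · simpa [hr] using hD.empty_mem
  | insert v S hvS ih =>
    have hv := hS v (Finset.mem_insert_self v S)
    have hS' : ∀ u ∈ S, u ∈ D := fun u hu => hS u (Finset.mem_insert_of_mem hu)
    have : {x | r ≤ ∑ u ∈ insert v S, a u * u.indicator 1 x} =
        v ∩ {x | r - a v ≤ ∑ u ∈ S, a u * u.indicator 1 x} ∪
          vᶜ ∩ {x | r ≤ ∑ u ∈ S, a u * u.indicator 1 x} := by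
      ext x
      by_cases hx : x ∈ v <;> simp [Finset.sum_insert hvS, hx, add_comm]
    rw [this]
    exact hD.union_mem (hD.inter_mem hv (ih hS' _)) (hD.inter_mem (hD.compl_mem hv) (ih hS' _))

theorem setOf_le_simpleFun_mem {c : Set X →₀ ℝ} (hc : ↑c.support ⊆ D) (r : ℝ) :
    {x | r ≤ simpleFun X c x} ∈ D := by
  simpa [simpleFun_apply] using hD.setOf_le_sum_mem (fun u hu => hc hu) c r

end IsBoolAlg

namespace FAM

variable {X : Type u} {D : Set (Set X)} (μ : FAM X D)

noncomputable def simpleIntegral : (Set X →₀ ℝ) →ₗ[ℝ] ℝ := Finsupp.linearCombination ℝ μ.val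

theorem simpleIntegral_apply (c : Set X →₀ ℝ) :
    μ.simpleIntegral c = ∑ u ∈ c.support, c u * μ.val u := by
  simp [simpleIntegral, Finsupp.linearCombination_apply, Finsupp.sum]

theorem simpleIntegral_single (u : Set X) (a : ℝ) :
    μ.simpleIntegral (Finsupp.single u a) = a * μ.val u := by
  simp [simpleIntegral]

variable (hD : IsBoolAlg D)
include hD

/-- Relativised to `t` so that the induction on `S` can split `t` along each new set. -/
theorem sum_mul_val_inter_le {S : Finset (Set X)} (hS : ∀ u ∈ S, u ∈ D) (a : Set X → ℝ)
    {t : Set X} (ht : t ∈ D) {r : ℝ} (h : ∀ x ∈ t, ∑ u ∈ S, a u * u.indicator 1 x ≤ r) :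
    ∑ u ∈ S, a u * μ.val (u ∩ t) ≤ r * μ.val t := by
  induction S using Finset.induction_on generalizing t r with
  | empty =>
    rcases t.eq_empty_or_nonempty with rfl | ⟨x, hx⟩
    · simp [μ.val_empty hD]
    · simpa using mul_nonneg (by simpa using h x hx) (μ.nonneg t ht)
  | insert v S hvS ih =>
    have hv := hS v (Finset.mem_insert_self v S)
    have hS' : ∀ u ∈ S, u ∈ D := fun u hu => hS u (Finset.mem_insert_of_mem hu)
    have h_in := ih hS' (hD.inter_mem ht hv) (r := r - a v) fun x ⟨hxt, hxv⟩ => by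
      have := h x hxt
      rw [Finset.sum_insert hvS, indicator_of_mem hxv] at this
      simp only [Pi.one_apply, mul_one] at this
      linarith
    have h_out := ih hS' (hD.inter_mem ht (hD.compl_mem hv)) (r := r) fun x ⟨hxt, hxv⟩ => by
      simpa [Finset.sum_insert hvS, indicator_of_notMem hxv] using h x hxt
    have h_split : ∑ u ∈ S, a u * μ.val (u ∩ t) =
        ∑ u ∈ S, a u * μ.val (u ∩ (t ∩ v)) + ∑ u ∈ S, a u * μ.val (u ∩ (t ∩ vᶜ)) := by
      rw [← Finset.sum_add_distrib]
      refine Finset.sum_congr rfl fun u hu => ?_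
      rw [← mul_add, ← inter_assoc, ← inter_assoc,
        μ.val_inter_add_val_inter_compl hD (hD.inter_mem (hS' u hu) ht) hv]
    rw [Finset.sum_insert hvS, h_split, inter_comm v t,
      ← μ.val_inter_add_val_inter_compl hD ht hv]
    linarith

theorem simpleIntegral_nonpos {c : Set X →₀ ℝ} (hc : ↑c.support ⊆ D)
    (h : simpleFun X c ≤ 0) : μ.simpleIntegral c ≤ 0 := by
  have := μ.sum_mul_val_inter_le hD (fun u hu => hc hu) c hD.univ_mem (r := 0)
    fun x _ => by simpa [simpleFun_apply] using h x
  simpa [μ.simpleIntegral_apply] using this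

theorem simpleIntegral_mono {c c' : Set X →₀ ℝ} (hc : ↑c.support ⊆ D) (hc' : ↑c'.support ⊆ D)
    (h : simpleFun X c ≤ simpleFun X c') : μ.simpleIntegral c ≤ μ.simpleIntegral c' := by
  have hsupp : ↑(c - c').support ⊆ D := fun u hu => by
    rcases Finset.mem_union.1 (Finsupp.support_sub hu) with hu | hu
    exacts [hc hu, hc' hu]
  have := μ.simpleIntegral_nonpos hD hsupp (by simpa [map_sub] using h)
  rwa [map_sub, sub_nonpos] at this

end FAM

namespace FAM

open scoped Pointwise

variable {X : Type u} {D : Set (Set X)} (μ : FAM X D)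

def upperSums (g : X → ℝ) : Set ℝ :=
  μ.simpleIntegral '' {c | ↑c.support ⊆ D ∧ g ≤ simpleFun X c}

noncomputable def upperIntegral (g : X → ℝ) : ℝ := sInf (μ.upperSums g)

theorem upperIntegral_smul {a : ℝ} (ha : 0 < a) (g : X → ℝ) :
    μ.upperIntegral (a • g) = a * μ.upperIntegral g := by
  have : μ.upperSums (a • g) = a • μ.upperSums g := by
    ext r
    simp only [upperSums, mem_smul_set, mem_image]
    constructor
    · rintro ⟨c, ⟨hc, hgc⟩, rfl⟩
      refine ⟨_, ⟨a⁻¹ • c, ⟨fun _ hu => hc (Finsupp.support_smul hu), fun x => ?_⟩, rfl⟩, ?_⟩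
      · simpa [le_inv_mul_iff₀ ha] using hgc x
      · simp [ha.ne']
    · rintro ⟨_, ⟨c, ⟨hc, hgc⟩, rfl⟩, rfl⟩
      refine ⟨a • c, ⟨fun _ hu => hc (Finsupp.support_smul hu), fun x => ?_⟩, by simp⟩
      simpa [mul_le_mul_iff_right₀ ha] using hgc x
  rw [upperIntegral, this, Real.sInf_smul_of_nonneg ha.le, smul_eq_mul, upperIntegral]

variable (hD : IsBoolAlg D)
include hD

theorem upperSums_nonempty {g : X → ℝ} {C : ℝ} (hg : ∀ x, |g x| ≤ C) :
    (μ.upperSums g).Nonempty :=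
  ⟨_, Finsupp.single univ C, ⟨coe_support_single_subset hD.univ_mem _,
    fun x => by simpa [simpleFun_single] using (abs_le.1 (hg x)).2⟩, rfl⟩

theorem upperSums_bddBelow {g : X → ℝ} {C : ℝ} (hg : ∀ x, |g x| ≤ C) :
    BddBelow (μ.upperSums g) := by
  refine ⟨-C, ?_⟩
  rintro _ ⟨c, ⟨hc, hgc⟩, rfl⟩
  have hC : simpleFun X (Finsupp.single univ (-C)) ≤ simpleFun X c := fun x => by
    simpa [simpleFun_single] using (abs_le.1 (hg x)).1.trans (hgc x)
  simpa [μ.simpleIntegral_single, μ.isProb] using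
    μ.simpleIntegral_mono hD (coe_support_single_subset hD.univ_mem _) hc hC

theorem upperIntegral_le {g : X → ℝ} {C : ℝ} (hg : ∀ x, |g x| ≤ C) {c : Set X →₀ ℝ}
    (hc : ↑c.support ⊆ D) (hgc : g ≤ simpleFun X c) : μ.upperIntegral g ≤ μ.simpleIntegral c :=
  csInf_le (μ.upperSums_bddBelow hD hg) ⟨c, ⟨hc, hgc⟩, rfl⟩

theorem upperIntegral_add_le {g₁ g₂ : X → ℝ} {C₁ C₂ : ℝ} (hg₁ : ∀ x, |g₁ x| ≤ C₁)
    (hg₂ : ∀ x, |g₂ x| ≤ C₂) :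
    μ.upperIntegral (g₁ + g₂) ≤ μ.upperIntegral g₁ + μ.upperIntegral g₂ := by
  have hg : ∀ x, |(g₁ + g₂) x| ≤ C₁ + C₂ := fun x =>
    (abs_add_le _ _).trans (add_le_add (hg₁ x) (hg₂ x))
  rw [upperIntegral, upperIntegral, upperIntegral, ← csInf_add (μ.upperSums_nonempty hD hg₁)
    (μ.upperSums_bddBelow hD hg₁) (μ.upperSums_nonempty hD hg₂) (μ.upperSums_bddBelow hD hg₂)]
  refine csInf_le_csInf (μ.upperSums_bddBelow hD hg)
    ((μ.upperSums_nonempty hD hg₁).add (μ.upperSums_nonempty hD hg₂)) ?_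
  rintro _ ⟨_, ⟨c₁, ⟨hc₁, hgc₁⟩, rfl⟩, _, ⟨c₂, ⟨hc₂, hgc₂⟩, rfl⟩, rfl⟩
  refine ⟨c₁ + c₂, ⟨fun u hu => (Finset.mem_union.1 (Finsupp.support_add hu)).elim
    (fun h => hc₁ h) (fun h => hc₂ h), ?_⟩, map_add _ _ _⟩
  rw [map_add]
  exact add_le_add hgc₁ hgc₂

/-- A `D`-simple function above `𝟙ₛ` dominates the indicator of its level set `{1 ≤ ·}`,
which lies in `D` and contains `s`. -/
theorem le_upperIntegral_indicator {s : Set X} {v : ℝ} (hv : ∀ u ∈ D, s ⊆ u → v ≤ μ.val u) :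
    v ≤ μ.upperIntegral (s.indicator 1) := by
  have hs : ∀ x, |s.indicator (1 : X → ℝ) x| ≤ 1 := fun x => by by_cases hx : x ∈ s <;> simp [hx]
  refine le_csInf (μ.upperSums_nonempty hD hs) ?_
  rintro _ ⟨c, ⟨hc, hsc⟩, rfl⟩
  set w := {x | 1 ≤ simpleFun X c x}
  have hw : w ∈ D := hD.setOf_le_simpleFun_mem hc 1
  have hsw : s ⊆ w := fun x hx => show (1 : ℝ) ≤ simpleFun X c x by simpa [hx] using hsc x
  have hwc : simpleFun X (Finsupp.single w 1) ≤ simpleFun X c := fun x => by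
    by_cases hx : x ∈ w
    · have : 1 ≤ simpleFun X c x := hx
      simpa [simpleFun_single, hx] using this
    · simpa [simpleFun_single, hx] using
        (s.indicator_nonneg (fun _ _ => zero_le_one) x).trans (hsc x)
  calc v ≤ μ.val w := hv w hw hsw
    _ = μ.simpleIntegral (Finsupp.single w 1) := by simp [μ.simpleIntegral_single]
    _ ≤ μ.simpleIntegral c :=
      μ.simpleIntegral_mono hD (coe_support_single_subset hw _) hc hwc

end FAM

theorem exists_linearMap_eq_and_le_sublinear {E : Type*} [AddCommGroup E] [Module ℝ E]
    (N : E → ℝ) (N_hom : ∀ c : ℝ, 0 < c → ∀ x, N (c • x) = c * N x)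
    (N_add : ∀ x y, N (x + y) ≤ N x + N y) (x : E) :
    ∃ g : E →ₗ[ℝ] ℝ, g x = N x ∧ ∀ y, g y ≤ N y := by
  have N_zero : N 0 = 0 := by
    have := N_hom 2 two_pos 0
    rw [smul_zero] at this
    linarith
  have h_ray : ∀ c : ℝ, c * N x ≤ N (c • x) := by
    intro c
    rcases lt_trichotomy c 0 with hc | rfl | hc
    · have := N_add (c • x) ((-c) • x)
      rw [← add_smul, add_neg_cancel, zero_smul, N_zero, N_hom _ (neg_pos.2 hc)] at this
      linarith
    · simp [N_zero]
    · exact (N_hom c hc x).ge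
  let f : E →ₗ.[ℝ] ℝ := LinearPMap.mkSpanSingleton' x (N x) fun (c : ℝ) hcx => by
    rcases smul_eq_zero.1 hcx with rfl | rfl <;> simp [N_zero]
  obtain ⟨g, hgf, hgN⟩ := exists_extension_of_le_sublinear f N N_hom N_add <| by
    rintro ⟨y, hy⟩
    rw [LinearPMap.domain_mkSpanSingleton] at hy
    obtain ⟨c, rfl⟩ := Submodule.mem_span_singleton.1 hy
    rw [LinearPMap.mkSpanSingleton'_apply]
    exact h_ray c
  refine ⟨g, ?_, hgN⟩
  have hx : x ∈ f.domain := by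
    rw [LinearPMap.domain_mkSpanSingleton]
    exact Submodule.mem_span_singleton_self x
  rw [hgf ⟨x, hx⟩, LinearPMap.mkSpanSingleton'_apply_self]

namespace FAM

variable {X : Type u} {D : Set (Set X)} (μ : FAM X D) (hD : IsBoolAlg D)
include hD

theorem exists_extension_of_le_simpleIntegral (D₁ : Set (Set X))
    (I : (Set X →₀ ℝ) →ₗ[ℝ] ℝ)
    (hI : ∀ c c', ↑c'.support ⊆ D → simpleFun X c ≤ simpleFun X c' → I c ≤ μ.simpleIntegral c') :
    ∃ ν : FAM X D₁, (∀ t, ν.val t = I (Finsupp.single t 1)) ∧ agreeOn D ν.val μ.val := by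
  have h_zero : ∀ c, simpleFun X c = 0 → I c = 0 := fun c hc => le_antisymm
    (by simpa using hI c 0 (by simp) hc.le)
    (by simpa using hI (-c) 0 (by simp) (by simp [hc]))
  have h_eq : ∀ t ∈ D, I (Finsupp.single t 1) = μ.val t := by
    intro t ht
    have h_le := hI _ _ (coe_support_single_subset ht 1) le_rfl
    have h_ge := hI (-Finsupp.single t 1) _
      (by rw [Finsupp.support_neg]; exact coe_support_single_subset ht 1) le_rfl
    rw [map_neg, map_neg, simpleIntegral_single] at h_ge
    rw [simpleIntegral_single] at h_le
    linarith
  refine ⟨⟨fun t => I (Finsupp.single t 1), fun t _ => ?_, h_eq univ hD.univ_mem ▸ μ.isProb,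
    fun s t _ _ hst => ?_⟩, fun _ => rfl, h_eq⟩
  · have := hI (-Finsupp.single t 1) 0 (by simp) fun x => by
      simp [simpleFun_single, indicator_nonneg]
    simp only [map_neg, map_zero, neg_nonpos] at this
    exact this
  · have := h_zero (Finsupp.single (s ∪ t) 1 - Finsupp.single s 1 - Finsupp.single t 1)
      (by ext x; simp [simpleFun_single, indicator_union_of_disjoint hst])
    simp only [map_sub] at this
    linarith

theorem exists_extension_le_val (D₁ : Set (Set X)) {s : Set X} {v : ℝ}
    (hv : ∀ u ∈ D, s ⊆ u → v ≤ μ.val u) :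
    ∃ ν : FAM X D₁, agreeOn D ν.val μ.val ∧ v ≤ ν.val s := by
  have h_bdd : ∀ c x, |simpleFun X c x| ≤ ∑ u ∈ c.support, |c u| := abs_simpleFun_le
  obtain ⟨I, hIs, hIN⟩ := exists_linearMap_eq_and_le_sublinear
    (fun c => μ.upperIntegral (simpleFun X c))
    (fun a ha c => by simp only [map_smul]; exact μ.upperIntegral_smul ha _)
    (fun c c' => by simpa only [map_add] using μ.upperIntegral_add_le hD (h_bdd c) (h_bdd c'))
    (Finsupp.single s 1)
  obtain ⟨ν, hνI, hνμ⟩ := μ.exists_extension_of_le_simpleIntegral hD D₁ I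
    fun c c' hc' hcc' => (hIN c).trans (μ.upperIntegral_le hD (h_bdd c) hc' hcc')
  refine ⟨ν, hνμ, ?_⟩
  rw [hνI, hIs, simpleFun_single, one_smul]
  exact μ.le_upperIntegral_indicator hD hv

end FAM

theorem exists_mem_superset_val_lt_of_smoothOn {X : Type u} {D D₁ : Set (Set X)}
    (hD : IsBoolAlg D) (hDD₁ : D ⊆ D₁) (μ : FAM X D₁) (hμ : SmoothOn D D₁ μ.val) {s : Set X}
    (hs : s ∈ D₁) {ε : ℝ} (hε : 0 < ε) : ∃ u ∈ D, s ⊆ u ∧ μ.val u < μ.val s + ε := by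
  by_contra! h
  obtain ⟨ν, hνμ, hνs⟩ := (μ.restrict hDD₁).exists_extension_le_val hD D₁ h
  have := hμ.2 ν μ hνμ (fun _ _ => rfl) s hs
  linarith

section ModelTheory

variable {L : FirstOrder.Language.{u, u}} {U : Type u} [L.Structure U]

theorem exists_finite_formula_realize_comp_iff {α : Type u} {γ : Type*} (φ : L.Formula (α ⊕ γ)) :
    ∃ (β : Type u) (_ : Finite β) (ι : β → α) (ψ : L.Formula (β ⊕ γ)), Function.Injective ι ∧
      ∀ (a : α → U) (c : γ → U), ψ.Realize (Sum.elim (a ∘ ι) c) ↔ φ.Realize (Sum.elim a c) := by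
  let β := {x : α // Sum.inl x ∈ φ.freeVarFinset}
  have : Finite β := Finite.of_injective (fun x : β => (⟨Sum.inl x.1, x.2⟩ : φ.freeVarFinset))
    fun x y h => Subtype.ext (Sum.inl_injective (congrArg Subtype.val h))
  let f : φ.freeVarFinset → β ⊕ γ
    | ⟨Sum.inl x, h⟩ => Sum.inl ⟨x, h⟩
    | ⟨Sum.inr j, _⟩ => Sum.inr j
  refine ⟨β, this, Subtype.val, φ.restrictFreeVar f, Subtype.val_injective, fun a c =>
    BoundedFormula.realize_restrictFreeVar _ ?_⟩
  rintro ⟨x | j, h⟩ <;> rfl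

theorem exists_formula_realize_iff_forall [Nonempty U] {α : Type u} {β : Type*}
    (φ : L.Formula (α ⊕ β)) :
    ∃ ψ : L.Formula β, ∀ b, ψ.Realize b ↔ ∀ a : α → U, φ.Realize (Sum.elim a b) := by
  obtain ⟨γ, _, ι, φ', hι, hφ'⟩ := exists_finite_formula_realize_comp_iff (U := U) φ
  refine ⟨(φ'.relabel Sum.swap).iAlls γ, fun b => ?_⟩
  rw [Formula.realize_iAlls, hι.surjective_comp_right.forall]
  simp [Formula.realize_relabel, Sum.elim_swap, hφ']

theorem exists_withConstants_formula_realize_iff {A : Set U} {β γ : Type*}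
    (ψ : L.Formula (β ⊕ γ)) (c : γ → U) (hc : ∀ j, c j ∈ A) :
    ∃ ψ' : (L[[A]]).Formula β, ∀ b, ψ'.Realize b ↔ ψ.Realize (Sum.elim b c) := by
  let cA : γ → A := fun j => ⟨c j, hc j⟩
  obtain ⟨ψ', hψ'⟩ : A.Definable L
      {b | (ψ.relabel (Sum.elim Sum.inr (Sum.inl ∘ cA))).Realize (Sum.elim (↑) b)} :=
    Set.definable_iff_exists_formula_sum.2 ⟨_, rfl⟩
  refine ⟨ψ', fun b => (Set.ext_iff.1 hψ' b).symm.trans (Formula.realize_relabel.trans ?_)⟩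
  congr!
  ext (i | j) <;> rfl

/-- The formula `∀ x (φ(x, y) → χ(x, c))`. -/
theorem exists_formula_realize_iff_defFam_subset {A : Set U} (hA : A.Nonempty) {α : Type u}
    {m m' : ℕ} (φ : L.Formula (α ⊕ Fin m)) (χ : L.Formula (α ⊕ Fin m')) (c : Fin m' → U)
    (hc : ∀ j, c j ∈ A) :
    ∃ ψ : (L[[A]]).Formula (Fin m), ∀ b, ψ.Realize b ↔ defFam φ b ⊆ defFam χ c := by
  have : Nonempty U := hA.to_subtype.map Subtype.val
  obtain ⟨θ, hθ⟩ := exists_formula_realize_iff_forall (U := U)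
    ((φ.relabel (Sum.map id Sum.inl)).imp (χ.relabel (Sum.map id Sum.inr)))
  obtain ⟨ψ, hψ⟩ := exists_withConstants_formula_realize_iff θ c hc
  refine ⟨ψ, fun b => ?_⟩
  rw [hψ, hθ]
  simp [Formula.realize_relabel, Sum.elim_comp_map, defFam, Set.subset_def]

end ModelTheory

namespace IsElemSubset

variable {L : FirstOrder.Language.{u, u}} {U : Type u} [L.Structure U] {M : Set U}
  (hM : IsElemSubset L U M)
include hM

theorem exists_mem_realize_one {γ : Type*} [Finite γ] (φ : L.Formula (γ ⊕ Fin 1)) (b : γ → U)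
    (hb : ∀ j, b j ∈ M) (h : ∃ a, φ.Realize (Sum.elim b a)) :
    ∃ a, (∀ i, a i ∈ M) ∧ φ.Realize (Sum.elim b a) := by
  obtain ⟨n, ⟨e⟩⟩ := Finite.exists_equiv_fin γ
  have key : ∀ a, (φ.relabel (Sum.map e id)).Realize (Sum.elim (b ∘ e.symm) a) ↔
      φ.Realize (Sum.elim b a) := fun a => by
    rw [Formula.realize_relabel, Sum.elim_comp_map]
    simp [Function.comp_assoc]
  obtain ⟨a, haM, ha⟩ := hM.2 n _ (b ∘ e.symm) (fun i => hb _) (h.imp fun a => (key a).2)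
  exact ⟨a, haM, (key a).1 ha⟩

theorem exists_mem_realize_of_finite (β : Type u) [Finite β] :
    ∀ (n : ℕ) (φ : L.Formula (β ⊕ Fin n)) (b : Fin n → U), (∀ j, b j ∈ M) →
      (∃ a, φ.Realize (Sum.elim a b)) → ∃ a, (∀ i, a i ∈ M) ∧ φ.Realize (Sum.elim a b) := by
  induction β using Finite.induction_empty_option with
  | of_equiv e ih =>
    intro n φ b hb ⟨a, ha⟩
    have key : ∀ a, (φ.relabel (Sum.map e.symm id)).Realize (Sum.elim a b) ↔
        φ.Realize (Sum.elim (a ∘ e.symm) b) := fun a => by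
      rw [Formula.realize_relabel, Sum.elim_comp_map, Function.comp_id]
    obtain ⟨a', ha'M, ha'⟩ := ih n _ b hb ⟨a ∘ e, (key _).2 (by simpa [Function.comp_assoc])⟩
    exact ⟨a' ∘ e.symm, fun i => ha'M _, (key a').1 ha'⟩
  | h_empty =>
    rintro n φ b - ⟨a, ha⟩
    exact ⟨a, fun i => i.elim, ha⟩
  | @h_option β _ ih =>
    intro n φ b hb ⟨a, ha⟩
    -- `φ(x₀, x, b)` with the new variable `x₀` moved last, as the one-variable case needs
    let g : Option β ⊕ Fin n → (β ⊕ Fin n) ⊕ Fin 1 :=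
      Sum.elim (fun o => o.elim (Sum.inr 0) (Sum.inl ∘ Sum.inl)) (Sum.inl ∘ Sum.inr)
    have key : ∀ (a' : β → U) (u : Fin 1 → U), (φ.relabel g).Realize (Sum.elim (Sum.elim a' b) u) ↔
        φ.Realize (Sum.elim (fun o => o.elim (u 0) a') b) := fun a' u => by
      rw [Formula.realize_relabel]
      congr!
      ext ((_ | x) | j) <;> rfl
    obtain ⟨a', ha'M, ha'⟩ := ih n ((φ.relabel g).iExs (Fin 1)) b hb ⟨a ∘ some, by
      rw [Formula.realize_iExs]
      refine ⟨fun _ => a none, (key _ _).2 ?_⟩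
      convert ha using 2
      ext (_ | x) <;> rfl⟩
    rw [Formula.realize_iExs] at ha'
    obtain ⟨u, huM, hu⟩ := hM.exists_mem_realize_one _ (Sum.elim a' b)
      (by rintro (i | j); exacts [ha'M i, hb j]) ha'
    exact ⟨fun o => o.elim (u 0) a', by rintro (_ | x); exacts [huM 0, ha'M x], (key _ _).1 hu⟩

theorem exists_mem_realize {α : Type u} {m : ℕ} (φ : L.Formula (α ⊕ Fin m)) (b : Fin m → U)
    (hb : ∀ j, b j ∈ M) (h : ∃ a, φ.Realize (Sum.elim a b)) :
    ∃ a, (∀ i, a i ∈ M) ∧ φ.Realize (Sum.elim a b) := by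
  obtain ⟨β, _, ι, ψ, hι, hψ⟩ := exists_finite_formula_realize_comp_iff (U := U) φ
  obtain ⟨a₀, ha₀⟩ := h
  obtain ⟨a, haM, ha⟩ := hM.exists_mem_realize_of_finite β m ψ b hb ⟨a₀ ∘ ι, (hψ a₀ b).2 ha₀⟩
  obtain ⟨u₀, hu₀⟩ := hM.1
  refine ⟨Function.extend ι a fun _ => u₀, fun i => ?_, ?_⟩
  · by_cases hi : ∃ j, ι j = i
    · obtain ⟨j, rfl⟩ := hi
      rw [hι.extend_apply]
      exact haM j
    · rwa [Function.extend_apply' _ _ _ hi]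
  · rwa [← hψ, Function.extend_comp hι]

theorem exists_mem_of_mem_deltaSet {α : Type u} {Δ : ∀ m : ℕ, Set (L.Formula (α ⊕ Fin m))}
    {t : Set (α → U)} (ht : t ∈ DeltaSet L Δ M) (hne : t.Nonempty) : ∃ a ∈ t, ∀ i, a i ∈ M := by
  obtain ⟨m, φ, b, -, hb, rfl⟩ := ht
  obtain ⟨a, haM, ha⟩ := hM.exists_mem_realize φ b hb hne
  exact ⟨a, ha, haM⟩

end IsElemSubset

theorem deltaSet_mono {L : FirstOrder.Language.{u, u}} {U : Type u} [L.Structure U] {α : Type u}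
    (Δ : ∀ m : ℕ, Set (L.Formula (α ⊕ Fin m))) {A B : Set U} (hAB : A ⊆ B) :
    DeltaSet L Δ A ⊆ DeltaSet L Δ B := by
  rintro _ ⟨m, φ, b, hφ, hb, rfl⟩
  exact ⟨m, φ, b, hφ, fun j => hAB (hb j), rfl⟩

theorem statement_14_general
    (L : FirstOrder.Language.{u, u}) (U : Type u) [L.Structure U]
    (α : Type u) (Δ : ∀ m : ℕ, Set (L.Formula (α ⊕ Fin m)))
    (halg : ∀ A : Set U, IsBoolAlg (DeltaSet L Δ A))
    (Mset : Set U) (hM : IsElemSubset L U Mset)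
    (μ : FAM (α → U) (DeltaSet L Δ (Set.univ : Set U)))
    (hsm : SmoothOn (DeltaSet L Δ Mset) (DeltaSet L Δ (Set.univ : Set U)) μ.val) :
    FinSatIn (DeltaSet L Δ (Set.univ : Set U)) μ.val Mset ∧
      ∀ m : ℕ, ∀ φ ∈ Δ m, ∀ r : ℝ, ∀ b : Fin m → U, μ.val (defFam φ b) < r →
        ∃ ψ : (L[[Mset]]).Formula (Fin m), ψ.Realize b ∧
          ∀ b' : Fin m → U, ψ.Realize b' → μ.val (defFam φ b') < r := by
  have hsub := deltaSet_mono Δ (subset_univ Mset)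
  have mem_deltaSet_univ : ∀ {m} {φ} (b : Fin m → U), φ ∈ Δ m → defFam φ b ∈ DeltaSet L Δ univ :=
    fun b hφ => ⟨_, _, b, hφ, fun _ => trivial, rfl⟩
  refine ⟨fun s hs hpos => ?_, fun m φ hφ r b hr => ?_⟩
  · obtain ⟨u, hu, hsu, hlt⟩ := exists_mem_superset_val_lt_of_smoothOn (halg Mset) hsub μ hsm
      ((halg univ).compl_mem hs) hpos
    have hu_compl : 0 < μ.val uᶜ := by
      rw [μ.val_compl (halg univ) (hsub hu)]
      rw [μ.val_compl (halg univ) hs] at hlt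
      linarith
    obtain ⟨a, ha, haM⟩ := hM.exists_mem_of_mem_deltaSet ((halg Mset).compl_mem hu)
      (μ.nonempty_of_val_pos (halg univ) hu_compl)
    exact ⟨a, compl_subset_comm.1 hsu ha, haM⟩
  · obtain ⟨_, ⟨m', χ, c, hχ, hc, rfl⟩, hφχ, hlt⟩ := exists_mem_superset_val_lt_of_smoothOn
      (halg Mset) hsub μ hsm (mem_deltaSet_univ b hφ) (sub_pos.2 hr)
    obtain ⟨ψ, hψ⟩ := exists_formula_realize_iff_defFam_subset hM.1 φ χ c hc
    refine ⟨ψ, (hψ b).2 hφχ, fun b' hb' => ?_⟩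
    have := μ.val_mono (halg univ) (mem_deltaSet_univ b' hφ) (mem_deltaSet_univ c hχ)
      ((hψ b').1 hb')
    linarith

/-- A global `Δ`-measure smooth over a small model `M` is generically
stable over `M`: it is finitely satisfiable in `M`, and `M`-definable (for every
`φ(x; y) ∈ Δ` and `r`, the set `{b : μ(φ(x; b)) < r}` is open in the `M`-logic
topology). -/
theorem statement_14
    (L : FirstOrder.Language.{u, u}) (U : Type u) [L.Structure U]
    (κ : Cardinal.{u}) (hMon : IsMonster L U κ)
    (α : Type u) (Δ : ∀ m : ℕ, Set (L.Formula (α ⊕ Fin m)))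
    (halg : ∀ A : Set U, IsBoolAlg (DeltaSet L Δ A))
    (Mset : Set U) (hM : IsElemSubset L U Mset) (hMsmall : SmallSet L κ Mset)
    (μ : FAM (α → U) (DeltaSet L Δ (Set.univ : Set U)))
    (hsm : SmoothOn (DeltaSet L Δ Mset) (DeltaSet L Δ (Set.univ : Set U)) μ.val) :
    FinSatIn (DeltaSet L Δ (Set.univ : Set U)) μ.val Mset ∧
      ∀ m : ℕ, ∀ φ ∈ Δ m, ∀ r : ℝ, ∀ b : Fin m → U, μ.val (defFam φ b) < r →
        ∃ ψ : (L[[Mset]]).Formula (Fin m), ψ.Realize b ∧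
          ∀ b' : Fin m → U, ψ.Realize b' → μ.val (defFam φ b') < r :=
  statement_14_general L U α Δ halg Mset hM μ hsm

end KeislerPaper
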